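/- Let 𝒰 be a basis of a topological space such that the Čech complex Č(𝒰; A) (products over strings of inclusions/embeddings, with the simplicial differential δ) is defined for a presheaf A of real vector spaces, and let ∇ be a family of data assigning ∇_{U_0} to objects and ∇_{h_k…h_1} to strings of inclusions. If k̃(·) satisfies the Stokes relation [k̃(∇_0,…,∇_k), d] = Σ_{i=0}^k (-1)^i k̃(∇_0,…,∇̂_i,…,∇_k), then the maps W(𝔤) → Tot Č(𝒰,Ω) built from k̃ applied to strings (∇_{U_0}, ∇_{h_1}, …, ∇_{h_k…h_1}) are chain maps. -/
import Mathlib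


noncomputable section

variable (Str : ℕ → Type*) (Ω : ∀ k, Str k → ℤ → Type*)

/-- Transport along an equality of (De Rham) degrees. -/
def castΩ [∀ k s m, AddCommGroup (Ω k s m)] {k : ℕ} {s : Str k} {m m' : ℤ}
    (h : m = m') : Ω k s m →+ Ω k s m' := by
  subst h; exact AddMonoidHom.id _

variable [∀ k s m, AddCommGroup (Ω k s m)]
  -- the faces of a string: `∂ k i` omits the `i`-th vertex (`i = 0` changes `U₀`)
  (face : ∀ k, Fin (k + 2) → Str (k + 1) → Str k)
  -- the vertical (De Rham) differential on forms over each string (i.e. on `Ω(P|_{U₀})`)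
  (dd : ∀ (k : ℕ) (s : Str k) (m : ℤ), Ω k s m →+ Ω k s (m + 1))
  -- the comparison maps (`h₁^*` for `i = 0`, the identity for `i ≥ 1`)
  (u : ∀ (k : ℕ) (i : Fin (k + 2)) (s : Str (k + 1)) (m : ℤ),
    Ω k (face k i s) m →+ Ω (k + 1) s m)
  -- the Weil algebra `W(𝔤)` as a cochain complex
  (W : ℤ → Type*) [∀ n, AddCommGroup (W n)] (dW : ∀ n, W n →+ W (n + 1))
  -- the Chern–Simons maps `k̃(∇_{U₀}, ∇_{h₁}, …, ∇_{h_k⋯h₁}) : W(𝔤) → Ω^{*-k}(P|_{U₀})`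
  (K : ∀ (k : ℕ) (s : Str k) (n : ℤ), W n →+ Ω k s (n - k))

/-- The total complex `⊕_{k} Čᵏ(𝒰, Ω^{n-k})` of the Čech–De Rham double complex. -/
def TotCD (n : ℤ) : Type _ := ∀ (k : ℕ) (s : Str k), Ω k s (n - k)

/-- The total differential `δ + (-1)^k d` of the Čech–De Rham double complex. -/
def DtotCD (n : ℤ) (x : TotCD Str Ω n) : TotCD Str Ω (n + 1) := fun k s =>
  match k, s with
  | 0, s =>
      castΩ Str Ω (by omega : (n - (0 : ℕ)) + 1 = (n + 1) - (0 : ℕ))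
        (dd 0 s (n - (0 : ℕ)) (x 0 s))
  | k + 1, s =>
      castΩ Str Ω (by push_cast; ring : (n - k) = (n + 1) - ((k : ℤ) + 1))
        (∑ i : Fin (k + 2), ((-1 : ℤ) ^ (i : ℕ)) • u k i s (n - k) (x k (face k i s)))
      + ((-1 : ℤ) ^ (k + 1)) •
          castΩ Str Ω (by push_cast; ring : (n - ((k : ℤ) + 1)) + 1 = (n + 1) - ((k : ℤ) + 1))
            (dd (k + 1) s (n - ((k : ℕ) + 1)) (x (k + 1) s))

lemma castΩ_castΩ {k : ℕ} {s : Str k} {m m' m'' : ℤ} (h : m = m') (h' : m' = m'')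
    (x : Ω k s m) : castΩ Str Ω h' (castΩ Str Ω h x) = castΩ Str Ω (h.trans h') x := by
  subst h; subst h'; rfl

lemma castΩ_self {k : ℕ} {s : Str k} {m : ℤ} (h : m = m) (x : Ω k s m) :
    castΩ Str Ω h x = x := rfl

/-- if the Chern–Simons maps `k̃` satisfy the simplicial Stokes relation
`[k̃(∇₀,…,∇_k), d] = Σᵢ (-1)ⁱ k̃(∇₀,…,∇̂ᵢ,…,∇_k)` (with `δ₀` incorporating the pull-back
`h₁^*`), then the induced map `W(𝔤) → Tot Č(𝒰, Ω)`, `w ↦ (s ↦ k̃(∇-string of s)(w))`, is a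
chain map for the total differential `δ + (-1)^k d`. -/
theorem stmt15
    (hStokes : ∀ (k : ℕ) (s : Str (k + 1)) (n : ℤ) (w : W n),
      castΩ Str Ω (by push_cast; ring : (n + 1) - ((k : ℤ) + 1) = n - k)
          (K (k + 1) s (n + 1) (dW n w))
        - ((-1 : ℤ) ^ (k + 1)) •
            castΩ Str Ω (by push_cast; ring : (n - ((k : ℤ) + 1)) + 1 = n - k)
              (dd (k + 1) s (n - ((k : ℕ) + 1)) (K (k + 1) s n w))
        = ∑ i : Fin (k + 2), ((-1 : ℤ) ^ (i : ℕ)) • u k i s (n - k) (K k (face k i s) n w))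
    (hStokes0 : ∀ (s : Str 0) (n : ℤ) (w : W n),
      K 0 s (n + 1) (dW n w)
        = castΩ Str Ω (by push_cast; ring : (n - ((0 : ℕ) : ℤ)) + 1 = (n + 1) - ((0 : ℕ) : ℤ))
            (dd 0 s (n - ((0 : ℕ) : ℤ)) (K 0 s n w)))
    (n : ℤ) (w : W n) :
    DtotCD Str Ω face dd u n (fun k s => K k s n w)
      = fun k s => K k s (n + 1) (dW n w) := by
  funext k s
  cases k with
  | zero =>
      simp only [DtotCD]
      exact (hStokes0 s n w).symm
  | succ k =>
      have h := congrArg (castΩ Str Ω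
        (by push_cast; ring : (n - (k : ℤ)) = (n + 1) - ((k : ℤ) + 1))) (hStokes k s n w)
      simp only [map_sub, map_zsmul, castΩ_castΩ, castΩ_self] at h
      simp only [DtotCD]
      rw [← h]
      exact sub_add_cancel _ _

end
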